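/- arXiv:2005.05771 — 4 statements merged into one kernel-verified Lean document; each statement's English description precedes it below -/
import Mathlib

section
/- On L²([0,1]^d), the operator 𝐓(𝐈 − 𝐏)𝐓* equals the integral operator with kernel ∏_{k=1}^d min(xₖ,yₖ) − ∏_{k=1}^d xₖ · ∏_{k=1}^d yₖ, i.e. the covariance operator of the d-dimensional pinned Brownian sheet 𝐁(x) = 𝐖(x) − 𝐖(1)∏ₖ xₖ admits the representation 𝐊_𝐁 = 𝐓(𝐈 − 𝐏)𝐓*. -/
/-! Swapping the order of integration, `(𝐓𝐓*u)(x) = ∫_{z ≤ x} ∫_{y ≥ z} u(y) dy dz` is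
`∫ |{z : 0 ≤ z ≤ x, z ≤ y}| u(y) dy`, and that set is the box `[0, x ⊓ y]` of volume
`∏ₖ min(xₖ, yₖ)`. At `x = 1` the same computation gives `∫ 𝐓*u = ∫ (∏ₖ yₖ) u(y) dy`,
so `𝐓𝐏𝐓*` has kernel `∏ₖ xₖ · ∏ₖ yₖ`. -/

open MeasureTheory

noncomputable section

/-- Lebesgue measure on the cube `[0,1]^d`, as a measure on `ℝ^d`. -/
def cubeMeasure (d : ℕ) : Measure (Fin d → ℝ) :=
  Measure.pi fun _ => volume.restrict (Set.Icc (0:ℝ) 1)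

open Set

theorem integral_setIntegral_slice_eq_integral_measureReal_smul {α β E : Type*}
    [MeasurableSpace α] [MeasurableSpace β] [NormedAddCommGroup E] [NormedSpace ℝ E]
    [CompleteSpace E] {μ : Measure α} {ν : Measure β} [IsFiniteMeasure μ] [SFinite ν]
    {S : Set (α × β)} (hS : MeasurableSet S) {f : β → E}
    (hf : Integrable f ν) :
    ∫ z, ∫ y in Prod.mk z ⁻¹' S, f y ∂ν ∂μ = ∫ y, μ.real ((·, y) ⁻¹' S) • f y ∂ν := by
  have hSf : Integrable (S.indicator fun p => f p.2) (μ.prod ν) :=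
    (hf.comp_snd μ).indicator hS
  calc ∫ z, ∫ y in Prod.mk z ⁻¹' S, f y ∂ν ∂μ
      = ∫ z, ∫ y, S.indicator (fun p => f p.2) (z, y) ∂ν ∂μ := by
        congr 1 with z
        rw [← integral_indicator (measurable_prodMk_left hS)]
        rfl
    _ = ∫ y, ∫ z, S.indicator (fun p => f p.2) (z, y) ∂μ ∂ν := integral_integral_swap hSf
    _ = ∫ y, μ.real ((·, y) ⁻¹' S) • f y ∂ν := by
        congr 1 with y
        rw [← integral_indicator_const _ (measurable_prodMk_right hS)]
        rfl

theorem cubeMeasure_eq_restrict (d : ℕ) :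
    cubeMeasure d = volume.restrict (Icc (0 : Fin d → ℝ) 1) := by
  rw [cubeMeasure, ← Measure.restrict_pi_pi, ← volume_pi, pi_univ_Icc]
  rfl

instance (d : ℕ) : IsProbabilityMeasure (cubeMeasure d) :=
  ⟨by simp [cubeMeasure_eq_restrict, Real.volume_Icc_pi]⟩

theorem ae_mem_Icc_cubeMeasure (d : ℕ) : ∀ᵐ x ∂cubeMeasure d, x ∈ Icc (0 : Fin d → ℝ) 1 := by
  rw [cubeMeasure_eq_restrict]
  exact ae_restrict_mem measurableSet_Icc

theorem cubeMeasure_real_Icc {d : ℕ} {x : Fin d → ℝ} (hx : x ∈ Icc 0 1) :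
    (cubeMeasure d).real (Icc 0 x) = ∏ k, x k := by
  rw [cubeMeasure_eq_restrict, measureReal_restrict_apply measurableSet_Icc,
    inter_eq_left.2 (Icc_subset_Icc_right hx.2), measureReal_def, Real.volume_Icc_pi,
    ENNReal.toReal_prod]
  refine Finset.prod_congr rfl fun k _ => ?_
  rw [Pi.zero_apply, sub_zero, ENNReal.toReal_ofReal (hx.1 k)]

theorem setIntegral_Icc_setIntegral_Icc_cubeMeasure {d : ℕ} {f : (Fin d → ℝ) → ℂ}
    (hf : Integrable f (cubeMeasure d)) {x : Fin d → ℝ} (hx : x ∈ Icc 0 1) :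
    ∫ z in Icc 0 x, ∫ y in Icc z 1, f y ∂cubeMeasure d ∂cubeMeasure d
      = ∫ y, ((∏ k, min (x k) (y k) : ℝ) : ℂ) * f y ∂cubeMeasure d := by
  set S : Set ((Fin d → ℝ) × (Fin d → ℝ)) := {p | p.2 ∈ Icc p.1 1}
  have hS : MeasurableSet S :=
    (measurableSet_le measurable_fst measurable_snd).inter (measurable_snd measurableSet_Iic)
  refine (integral_setIntegral_slice_eq_integral_measureReal_smul hS hf).trans
    (integral_congr_ae ?_)
  filter_upwards [ae_mem_Icc_cubeMeasure d] with y hy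
  have hslice : (·, y) ⁻¹' S ∩ Icc 0 x = Icc 0 (x ⊓ y) := by
    ext z
    simp only [S, mem_inter_iff, mem_preimage, mem_ofPred_eq, mem_Icc, le_inf_iff, hy.2]
    tauto
  rw [measureReal_restrict_apply (measurable_prodMk_right hS), hslice,
    cubeMeasure_real_Icc ⟨le_inf hx.1 hy.1, inf_le_left.trans hx.2⟩, Complex.real_smul]
  rfl

theorem integral_setIntegral_Icc_cubeMeasure {d : ℕ} {f : (Fin d → ℝ) → ℂ}
    (hf : Integrable f (cubeMeasure d)) :
    ∫ z, ∫ y in Icc z 1, f y ∂cubeMeasure d ∂cubeMeasure d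
      = ∫ y, ((∏ k, y k : ℝ) : ℂ) * f y ∂cubeMeasure d := by
  have h := setIntegral_Icc_setIntegral_Icc_cubeMeasure hf (x := 1) ⟨zero_le_one, le_rfl⟩
  rw [Measure.restrict_eq_self_of_ae_mem (ae_mem_Icc_cubeMeasure d)] at h
  refine h.trans (integral_congr_ae ?_)
  filter_upwards [ae_mem_Icc_cubeMeasure d] with y hy
  rw [Finset.prod_congr rfl fun k _ => min_eq_right (hy.2 k)]

theorem norm_ofReal_prod_le_one {ι : Type*} [Fintype ι] {a : ι → ℝ} (ha : a ∈ Icc 0 1) :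
    ‖((∏ k, a k : ℝ) : ℂ)‖ ≤ 1 := by
  rw [Complex.norm_real, Real.norm_of_nonneg (Finset.prod_nonneg fun k _ => ha.1 k)]
  exact Finset.prod_le_one (fun k _ => ha.1 k) fun k _ => ha.2 k

theorem setIntegral_Icc_sub_integral_cubeMeasure {d : ℕ} {u w : (Fin d → ℝ) → ℂ}
    (hu : Integrable u (cubeMeasure d)) (hw : Integrable w (cubeMeasure d))
    (hwu : w =ᵐ[cubeMeasure d] fun z => ∫ y in Icc z 1, u y ∂cubeMeasure d)
    {x : Fin d → ℝ} (hx : x ∈ Icc 0 1) :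
    ∫ z in Icc 0 x, (w z - ∫ z', w z' ∂cubeMeasure d) ∂cubeMeasure d
      = ∫ y, (((∏ k, min (x k) (y k)) - (∏ k, x k) * ∏ k, y k : ℝ) : ℂ) * u y
          ∂cubeMeasure d := by
  have hmin : Integrable (fun y => ((∏ k, min (x k) (y k) : ℝ) : ℂ) * u y) (cubeMeasure d) :=
    hu.bdd_mul (c := 1) (Continuous.aestronglyMeasurable (by fun_prop)) <|
      (ae_mem_Icc_cubeMeasure d).mono fun y hy =>
        norm_ofReal_prod_le_one (a := x ⊓ y) ⟨le_inf hx.1 hy.1, inf_le_left.trans hx.2⟩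
  have hprod : Integrable (fun y => ((∏ k, y k : ℝ) : ℂ) * u y) (cubeMeasure d) :=
    hu.bdd_mul (c := 1) (by fun_prop) <|
      (ae_mem_Icc_cubeMeasure d).mono fun y hy => norm_ofReal_prod_le_one hy
  calc ∫ z in Icc 0 x, (w z - ∫ z', w z' ∂cubeMeasure d) ∂cubeMeasure d
      = ∫ z in Icc 0 x, w z ∂cubeMeasure d
          - (cubeMeasure d).real (Icc 0 x) • ∫ z, w z ∂cubeMeasure d := by
        rw [integral_sub hw.integrableOn integrableOn_const, setIntegral_const]
    _ = ∫ y, ((∏ k, min (x k) (y k) : ℝ) : ℂ) * u y ∂cubeMeasure d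
          - ((∏ k, x k : ℝ) : ℂ) * ∫ y, ((∏ k, y k : ℝ) : ℂ) * u y ∂cubeMeasure d := by
        rw [integral_congr_ae (ae_restrict_of_ae hwu), integral_congr_ae hwu,
          setIntegral_Icc_setIntegral_Icc_cubeMeasure hu hx,
          integral_setIntegral_Icc_cubeMeasure hu, cubeMeasure_real_Icc hx, Complex.real_smul]
    _ = _ := by
        rw [← integral_const_mul, ← integral_sub hmin (hprod.const_mul _)]
        congr 1 with y
        push_cast
        ring

theorem statement4_general (d : ℕ)
    (T Tstar P K : Lp ℂ 2 (cubeMeasure d) →L[ℂ] Lp ℂ 2 (cubeMeasure d))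
    (hT : ∀ u : Lp ℂ 2 (cubeMeasure d), ∀ᵐ x ∂(cubeMeasure d),
      T u x = ∫ y in Set.Icc 0 x, u y ∂(cubeMeasure d))
    (hTstar : ∀ u : Lp ℂ 2 (cubeMeasure d), ∀ᵐ x ∂(cubeMeasure d),
      Tstar u x = ∫ y in Set.Icc x 1, u y ∂(cubeMeasure d))
    (hP : ∀ u : Lp ℂ 2 (cubeMeasure d), ∀ᵐ x ∂(cubeMeasure d),
      P u x = ∫ y, u y ∂(cubeMeasure d))
    (hK : ∀ u : Lp ℂ 2 (cubeMeasure d), ∀ᵐ x ∂(cubeMeasure d),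
      K u x = ∫ y, (((∏ k, min (x k) (y k)) - (∏ k, x k) * ∏ k, y k : ℝ) : ℂ)
        * u y ∂(cubeMeasure d)) :
    T ∘L (1 - P) ∘L Tstar = K := by
  refine ContinuousLinearMap.ext fun u => Lp.ext ?_
  set w := Tstar u
  have hproj : ((1 - P) w : (Fin d → ℝ) → ℂ) =ᵐ[cubeMeasure d]
      fun z => w z - ∫ z', w z' ∂cubeMeasure d := by
    filter_upwards [Lp.coeFn_sub w (P w), hP w] with z hsub hPz
    rw [sub_apply, one_apply_eq_self, hsub, Pi.sub_apply, hPz]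
  filter_upwards [hT ((1 - P) w), hK u, ae_mem_Icc_cubeMeasure d] with x hTx hKx hx
  rw [ContinuousLinearMap.comp_apply, ContinuousLinearMap.comp_apply, hTx, hKx,
    integral_congr_ae (ae_restrict_of_ae hproj)]
  exact setIntegral_Icc_sub_integral_cubeMeasure ((Lp.memLp u).integrable one_le_two)
    ((Lp.memLp w).integrable one_le_two) (hTstar u) hx

/-- On `L²([0,1]^d)`, `𝐓(𝐈 - 𝐏)𝐓*` equals the integral operator with kernel
`∏ₖ min(xₖ,yₖ) - ∏ₖ xₖ · ∏ₖ yₖ`, i.e. the covariance operator of the pinned Brownian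
sheet admits the representation `𝐊_𝐁 = 𝐓(𝐈 - 𝐏)𝐓*`. -/
theorem statement4 (d : ℕ) (hd : 1 ≤ d)
    (T Tstar P K : Lp ℂ 2 (cubeMeasure d) →L[ℂ] Lp ℂ 2 (cubeMeasure d))
    (hT : ∀ u : Lp ℂ 2 (cubeMeasure d), ∀ᵐ x ∂(cubeMeasure d),
      T u x = ∫ y in Set.Icc 0 x, u y ∂(cubeMeasure d))
    (hTstar : ∀ u : Lp ℂ 2 (cubeMeasure d), ∀ᵐ x ∂(cubeMeasure d),
      Tstar u x = ∫ y in Set.Icc x 1, u y ∂(cubeMeasure d))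
    (hP : ∀ u : Lp ℂ 2 (cubeMeasure d), ∀ᵐ x ∂(cubeMeasure d),
      P u x = ∫ y, u y ∂(cubeMeasure d))
    (hK : ∀ u : Lp ℂ 2 (cubeMeasure d), ∀ᵐ x ∂(cubeMeasure d),
      K u x = ∫ y, (((∏ k, min (x k) (y k)) - (∏ k, x k) * ∏ k, y k : ℝ) : ℂ)
        * u y ∂(cubeMeasure d)) :
    T ∘L (1 - P) ∘L Tstar = K :=
  statement4_general d T Tstar P K hT hTstar hP hK
end
end

section
/- Let f ∈ L²(0,1) and set F(t) = ∫₀ᵗ f(s)² ds. Consider the integral operators on L²(0,1) with the kernels Q₁(x,y) = F(min(x,y)) − ∫₀¹ F(min(x,u)) du − ∫₀¹ F(min(v,y)) dv + ∫₀¹∫₀¹ F(min(u,v)) du dv (the covariance of the centered stochastic integral ℱ_W(x) = ∫₀ˣ f dW minus its average) and Q₂(x,y) = f(x) f(y) (min(x,y) − xy) (the covariance of f(x)B(x), B the Brownian bridge). Then these two integral operators have the same nonzero eigenvalues with multiplicities. -/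
open MeasureTheory

noncomputable section

/-- Lebesgue measure on `[0,1]`, as a measure on `ℝ`. -/
def unitMeasure : Measure ℝ := volume.restrict (Set.Icc (0:ℝ) 1)

/-- `A` and `B` have the same nonzero eigenvalues with multiplicities. -/
def SameNonzeroEigenvalues {H : Type*} [NormedAddCommGroup H] [NormedSpace ℂ H]
    (A B : H →L[ℂ] H) : Prop :=
  ∀ l : ℂ, l ≠ 0 → ∀ m : ℕ, 1 ≤ m →
    Module.rank ℂ (LinearMap.ker (((A - l • 1) ^ m : H →L[ℂ] H) : H →ₗ[ℂ] H)) =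
    Module.rank ℂ (LinearMap.ker (((B - l • 1) ^ m : H →L[ℂ] H) : H →ₗ[ℂ] H))

/-!
Put `G(x,s) = f(s) (𝟙[s ≤ x] - (1 - s))` (`wienerKernel f x s`), the integrand representing
`ℱ_W(x) - ∫₀¹ ℱ_W` as a Wiener integral `∫₀¹ G(x,s) dW(s)`. Both kernels are Gram kernels of `G`:
`Q₁(x,y) = ∫ G(x,s) G(y,s) ds` (double centering of `F(min(x,y)) = ∫ f² 𝟙[s ≤ x] 𝟙[s ≤ y]`) and
`Q₂(x,y) = ∫ G(s,x) G(s,y) ds` (the covariance of `𝟙[x ≤ s]` and `𝟙[y ≤ s]` under the uniform law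
is `min(x,y) - xy`). Hence `K₁ = T T'` and `K₂ = T' T` for the integral operators `T`, `T'` of
`G` and its transpose, and for `λ ≠ 0` each of `T`, `T'` maps the generalized `λ`-eigenspaces of
one product injectively into those of the other.
-/

open Polynomial in
lemma Module.End.pow_sub_smul_one_apply_of_apply_eq_zero {R M : Type*} [CommRing R]
    [AddCommGroup M] [Module R M] {A : Module.End R M} {u : M} (hu : A u = 0) (l : R) (m : ℕ) :
    ((A - l • 1) ^ m) u = (-l) ^ m • u := by
  have h : (A - l • 1) ^ m = aeval A ((X - C l) ^ m) := by
    simp [Algebra.algebraMap_eq_smul_one]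
  rw [h, aeval_apply_of_mem_apply_eq_smul (μ := 0) (by simpa using hu)]
  simp

section EigenvalueMultiplicity

variable {K V : Type*} [Field K] [AddCommGroup V] [Module K V]

lemma Module.End.rank_ker_pow_mul_sub_smul_le (R S : Module.End K V) {l : K} (hl : l ≠ 0)
    (m : ℕ) :
    Module.rank K (LinearMap.ker ((R * S - l • 1) ^ m)) ≤
      Module.rank K (LinearMap.ker ((S * R - l • 1) ^ m)) := by
  have hS : SemiconjBy S ((R * S - l • 1) ^ m) ((S * R - l • 1) ^ m) :=
    (SemiconjBy.sub_right (mul_assoc S R S).symm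
      ((Commute.one_right S).smul_right l)).pow_right m
  have hmaps : ∀ u ∈ LinearMap.ker ((R * S - l • 1) ^ m),
      S u ∈ LinearMap.ker ((S * R - l • 1) ^ m) := by
    intro u hu
    rw [LinearMap.mem_ker] at hu ⊢
    rw [← Module.End.mul_apply, ← hS.eq, Module.End.mul_apply, hu, map_zero]
  refine LinearMap.rank_le_of_injective (S.restrict hmaps) ?_
  rw [← LinearMap.ker_eq_bot, LinearMap.ker_eq_bot']
  rintro ⟨u, hu⟩ hSu
  have hSu : S u = 0 := congrArg Subtype.val hSu
  have hRSu : (R * S) u = 0 := by rw [Module.End.mul_apply, hSu, map_zero]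
  rw [LinearMap.mem_ker, Module.End.pow_sub_smul_one_apply_of_apply_eq_zero hRSu] at hu
  exact Subtype.ext ((smul_eq_zero.mp hu).resolve_left (pow_ne_zero _ (neg_ne_zero.mpr hl)))

lemma Module.End.rank_ker_pow_mul_sub_smul_eq (R S : Module.End K V) {l : K} (hl : l ≠ 0)
    (m : ℕ) :
    Module.rank K (LinearMap.ker ((R * S - l • 1) ^ m)) =
      Module.rank K (LinearMap.ker ((S * R - l • 1) ^ m)) :=
  (rank_ker_pow_mul_sub_smul_le R S hl m).antisymm (rank_ker_pow_mul_sub_smul_le S R hl m)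

end EigenvalueMultiplicity

lemma ContinuousLinearMap.toLinearMap_sub_smul_one_pow {R M : Type*} [CommRing R]
    [TopologicalSpace M] [AddCommGroup M] [Module R M] [ContinuousConstSMul R M]
    [IsTopologicalAddGroup M] (A : M →L[R] M) (l : R) (m : ℕ) :
    (((A - l • 1) ^ m : M →L[R] M) : M →ₗ[R] M) = ((A : M →ₗ[R] M) - l • 1) ^ m := by
  rw [toLinearMap_pow, toLinearMap_sub, toLinearMap_smul, toLinearMap_one]

open Set

section KernelOperator

variable {α : Type*} [MeasurableSpace α] {μ : Measure α} {k l : α → α → ℂ}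

def IsL2ProductDominated (μ : Measure α) (k : α → α → ℂ) : Prop :=
  AEStronglyMeasurable (Function.uncurry k) (μ.prod μ) ∧
    ∃ a b : α → ℝ, MemLp a 2 μ ∧ MemLp b 2 μ ∧
      ∀ᵐ p ∂μ.prod μ, ‖k p.1 p.2‖ ≤ ‖a p.1‖ * ‖b p.2‖

def kernelIntegral (μ : Measure α) (k : α → α → ℂ) (u : α → ℂ) (x : α) : ℂ :=
  ∫ y, k x y * u y ∂μ

lemma kernelIntegral_congr {u v : α → ℂ} (h : u =ᵐ[μ] v) :
    kernelIntegral μ k u = kernelIntegral μ k v :=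
  funext fun x => integral_congr_ae (h.mono fun y hy => congrArg (k x y * ·) hy)

lemma integrable_norm_mul_norm_of_memLp_two {E F : Type*} [NormedAddCommGroup E]
    [NormedAddCommGroup F] {a : α → E} {u : α → F} (ha : MemLp a 2 μ) (hu : MemLp u 2 μ) :
    Integrable (fun y => ‖a y‖ * ‖u y‖) μ :=
  ha.norm.integrable_mul hu.norm

lemma kernelIntegral_smul (c : ℂ) (u : Lp ℂ 2 μ) :
    kernelIntegral μ k ⇑(c • u) = c • kernelIntegral μ k u := by
  rw [kernelIntegral_congr (Lp.coeFn_smul c u)]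
  funext x
  simp only [kernelIntegral, Pi.smul_apply, smul_eq_mul, mul_left_comm _ c]
  exact integral_const_mul c _

namespace IsL2ProductDominated

variable [SFinite μ]

lemma swap (hk : IsL2ProductDominated μ k) : IsL2ProductDominated μ (fun x y => k y x) := by
  obtain ⟨hkm, a, b, ha, hb, hkb⟩ := hk
  refine ⟨hkm.comp_measurePreserving Measure.measurePreserving_swap, b, a, hb, ha, ?_⟩
  filter_upwards [Measure.measurePreserving_swap.quasiMeasurePreserving.ae hkb] with p hp
  rw [mul_comm]
  exact hp

lemma ae_integrable_mul (hk : IsL2ProductDominated μ k) (u : Lp ℂ 2 μ) :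
    ∀ᵐ x ∂μ, Integrable (fun y => k x y * u y) μ := by
  obtain ⟨hkm, a, b, -, hb, hkb⟩ := hk
  filter_upwards [hkm.prodMk_left, Measure.ae_ae_of_ae_prod hkb] with x hxm hxb
  refine ((integrable_norm_mul_norm_of_memLp_two hb (Lp.memLp u)).const_mul ‖a x‖).mono'
    (hxm.mul (Lp.aestronglyMeasurable u)) ?_
  filter_upwards [hxb] with y hy
  rw [norm_mul, ← mul_assoc]
  exact mul_le_mul_of_nonneg_right hy (norm_nonneg _)

lemma memLp_kernelIntegral (hk : IsL2ProductDominated μ k) (u : Lp ℂ 2 μ) :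
    MemLp (kernelIntegral μ k u) 2 μ := by
  obtain ⟨hkm, a, b, ha, hb, hkb⟩ := hk
  have hbu := integrable_norm_mul_norm_of_memLp_two hb (Lp.memLp u)
  have hmeas : AEStronglyMeasurable (kernelIntegral μ k u) μ :=
    (hkm.mul ((Lp.aestronglyMeasurable u).comp_quasiMeasurePreserving
      Measure.quasiMeasurePreserving_snd)).integral_prod_right'
  refine MemLp.of_le_mul ha hmeas (c := ∫ y, ‖b y‖ * ‖u y‖ ∂μ) ?_
  filter_upwards [Measure.ae_ae_of_ae_prod hkb] with x hx
  calc ‖kernelIntegral μ k u x‖ ≤ ∫ y, ‖a x‖ * (‖b y‖ * ‖u y‖) ∂μ := by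
        refine norm_integral_le_of_norm_le (hbu.const_mul _) ?_
        filter_upwards [hx] with y hy
        rw [norm_mul, ← mul_assoc]
        exact mul_le_mul_of_nonneg_right hy (norm_nonneg _)
    _ = (∫ y, ‖b y‖ * ‖u y‖ ∂μ) * ‖a x‖ := by rw [integral_const_mul, mul_comm]

lemma kernelIntegral_add (hk : IsL2ProductDominated μ k) (u v : Lp ℂ 2 μ) :
    kernelIntegral μ k ⇑(u + v) =ᵐ[μ] kernelIntegral μ k u + kernelIntegral μ k v := by
  filter_upwards [hk.ae_integrable_mul u, hk.ae_integrable_mul v] with x hu hv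
  rw [kernelIntegral_congr (Lp.coeFn_add u v)]
  simp only [kernelIntegral, Pi.add_apply, mul_add]
  exact integral_add hu hv

end IsL2ProductDominated

variable [SFinite μ]

def kernelOperator (hk : IsL2ProductDominated μ k) : Lp ℂ 2 μ →ₗ[ℂ] Lp ℂ 2 μ where
  toFun u := (hk.memLp_kernelIntegral u).toLp _
  map_add' u v := by
    rw [← MemLp.toLp_add]
    exact MemLp.toLp_congr _ _ (hk.kernelIntegral_add u v)
  map_smul' c u := by
    rw [RingHom.id_apply, ← MemLp.toLp_const_smul]
    exact MemLp.toLp_congr _ _ (.of_forall (congrFun (kernelIntegral_smul c u)))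

lemma kernelOperator_apply (hk : IsL2ProductDominated μ k) (u : Lp ℂ 2 μ) :
    ⇑(kernelOperator hk u) =ᵐ[μ] kernelIntegral μ k u :=
  MemLp.coeFn_toLp (hk.memLp_kernelIntegral u)

lemma kernelOperator_mul_apply (hk : IsL2ProductDominated μ k) (hl : IsL2ProductDominated μ l)
    (u : Lp ℂ 2 μ) :
    ⇑((kernelOperator hk * kernelOperator hl) u) =ᵐ[μ]
      fun x => ∫ y, (∫ s, k x s * l s y ∂μ) * u y ∂μ := by
  obtain ⟨hkm, a, b, -, hb, hkb⟩ := id hk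
  obtain ⟨hlm, a', b', ha', hb', hlb⟩ := id hl
  filter_upwards [kernelOperator_apply hk _, hkm.prodMk_left,
    Measure.ae_ae_of_ae_prod hkb] with x hx hxm hxb
  have hint : Integrable (Function.uncurry fun s y => k x s * (l s y * u y)) (μ.prod μ) := by
    refine ((((integrable_norm_mul_norm_of_memLp_two hb ha').const_mul ‖a x‖).mul_prod
      (integrable_norm_mul_norm_of_memLp_two hb' (Lp.memLp u)))).mono'
      ((hxm.comp_quasiMeasurePreserving Measure.quasiMeasurePreserving_fst).mul
        (hlm.mul ((Lp.aestronglyMeasurable u).comp_quasiMeasurePreserving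
          Measure.quasiMeasurePreserving_snd))) ?_
    filter_upwards [Measure.quasiMeasurePreserving_fst.ae hxb, hlb] with p h₁ h₂
    simp only [Function.uncurry, norm_mul]
    calc ‖k x p.1‖ * (‖l p.1 p.2‖ * ‖u p.2‖)
        ≤ (‖a x‖ * ‖b p.1‖) * ((‖a' p.1‖ * ‖b' p.2‖) * ‖u p.2‖) := by gcongr
      _ = ‖a x‖ * (‖b p.1‖ * ‖a' p.1‖) * (‖b' p.2‖ * ‖u p.2‖) := by ring
  rw [Module.End.mul_apply, hx, kernelIntegral_congr (kernelOperator_apply hl u)]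
  calc ∫ s, k x s * ∫ y, l s y * u y ∂μ ∂μ = ∫ s, ∫ y, k x s * (l s y * u y) ∂μ ∂μ := by
        simp only [integral_const_mul]
    _ = ∫ y, ∫ s, k x s * (l s y * u y) ∂μ ∂μ := integral_integral_swap hint
    _ = ∫ y, (∫ s, k x s * l s y ∂μ) * u y ∂μ := by
        simp only [← integral_mul_const, mul_assoc]

lemma eq_kernelOperator_mul (hk : IsL2ProductDominated μ k) (hl : IsL2ProductDominated μ l)
    (T : Lp ℂ 2 μ →ₗ[ℂ] Lp ℂ 2 μ) {q : α → α → ℂ}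
    (hT : ∀ u : Lp ℂ 2 μ, ∀ᵐ x ∂μ, T u x = ∫ y, q x y * u y ∂μ)
    (hq : ∀ᵐ x ∂μ, ∀ᵐ y ∂μ, q x y = ∫ s, k x s * l s y ∂μ) :
    T = kernelOperator hk * kernelOperator hl := by
  refine LinearMap.ext fun u => Lp.ext ?_
  filter_upwards [hT u, kernelOperator_mul_apply hk hl u, hq] with x h₁ h₂ hx
  rw [h₁, h₂]
  exact integral_congr_ae (hx.mono fun y hy => congrArg (· * u y) hy)

end KernelOperator

section GramCentering

variable {β α : Type*} [MeasurableSpace β] [MeasurableSpace α] {μ : Measure β}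
  {ν : Measure α} {ψ : β → α → ℝ} {C : ℝ} {w : α → ℝ}

lemma integrable_weight_mul_mul (hw : Integrable w ν) {φ φ' : α → ℝ}
    (hφ : AEStronglyMeasurable φ ν) (hφ' : AEStronglyMeasurable φ' ν) {C' : ℝ}
    (hφC : ∀ s, ‖φ s‖ ≤ C) (hφC' : ∀ s, ‖φ' s‖ ≤ C') :
    Integrable (fun s => w s * (φ s * φ' s)) ν :=
  hw.mul_bdd (hφ.mul hφ') (.of_forall fun s => by
    rw [norm_mul]
    exact mul_le_mul (hφC s) (hφC' s) (norm_nonneg _) ((norm_nonneg _).trans (hφC s)))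

variable [IsProbabilityMeasure μ] [SFinite ν]

lemma integral_integral_weight_mul_mul (hw : Integrable w ν)
    (hψ : StronglyMeasurable (Function.uncurry ψ)) (hψC : ∀ x s, ‖ψ x s‖ ≤ C)
    {φ : α → ℝ} (hφ : AEStronglyMeasurable φ ν) {C' : ℝ} (hφC : ∀ s, ‖φ s‖ ≤ C') :
    ∫ v, ∫ s, w s * (φ s * ψ v s) ∂ν ∂μ = ∫ s, w s * (φ s * ∫ v, ψ v s ∂μ) ∂ν := by
  have hint : Integrable (Function.uncurry fun v s => w s * (φ s * ψ v s)) (μ.prod ν) := by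
    refine ((integrable_const (C' * C)).mul_prod hw.norm).mono'
      ((hw.1.comp_quasiMeasurePreserving Measure.quasiMeasurePreserving_snd).mul
        ((hφ.comp_quasiMeasurePreserving Measure.quasiMeasurePreserving_snd).mul
          hψ.aestronglyMeasurable)) (.of_forall fun p => ?_)
    simp only [Function.uncurry, norm_mul]
    calc ‖w p.2‖ * (‖φ p.2‖ * ‖ψ p.1 p.2‖) ≤ ‖w p.2‖ * (C' * C) := by
          gcongr
          · exact (norm_nonneg _).trans (hφC p.2)
          · exact hφC _
          · exact hψC _ _
      _ = C' * C * ‖w p.2‖ := mul_comm _ _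
  rw [integral_integral_swap hint]
  simp only [integral_const_mul]

theorem integral_weight_mul_centered_mul_centered (hw : Integrable w ν)
    (hψ : StronglyMeasurable (Function.uncurry ψ)) (hψC : ∀ x s, ‖ψ x s‖ ≤ C)
    {c : β → β → ℝ} (hc : ∀ x y, c x y = ∫ s, w s * (ψ x s * ψ y s) ∂ν) (x y : β) :
    ∫ s, w s * ((ψ x s - ∫ v, ψ v s ∂μ) * (ψ y s - ∫ v, ψ v s ∂μ)) ∂ν =
      c x y - ∫ v, c x v ∂μ - ∫ v, c v y ∂μ + ∫ v, ∫ v', c v v' ∂μ ∂μ := by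
  set m : α → ℝ := fun s => ∫ v, ψ v s ∂μ
  have hψx (x : β) : AEStronglyMeasurable (ψ x) ν :=
    (hψ.comp_measurable measurable_prodMk_left).aestronglyMeasurable
  have hm : AEStronglyMeasurable m ν := hψ.integral_prod_left.aestronglyMeasurable
  have hmC (s : α) : ‖m s‖ ≤ C := by
    simpa using norm_integral_le_of_norm_le_const (μ := μ) (.of_forall fun v => hψC v s)
  have hleft (x : β) : ∫ v, c x v ∂μ = ∫ s, w s * (ψ x s * m s) ∂ν := by
    simp only [hc]
    exact integral_integral_weight_mul_mul hw hψ hψC (hψx x) (hψC x)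
  have hright : ∫ v, c v y ∂μ = ∫ s, w s * (ψ y s * m s) ∂ν := by
    simp only [hc, mul_comm (ψ _ _) (ψ y _)]
    exact integral_integral_weight_mul_mul hw hψ hψC (hψx y) (hψC y)
  have hboth : ∫ v, ∫ v', c v v' ∂μ ∂μ = ∫ s, w s * (m s * m s) ∂ν := by
    simp only [hleft, mul_comm (ψ _ _) (m _)]
    exact integral_integral_weight_mul_mul hw hψ hψC hm hmC
  have h₁ := integrable_weight_mul_mul hw (hψx x) (hψx y) (hψC x) (hψC y)
  have h₂ := integrable_weight_mul_mul hw (hψx x) hm (hψC x) hmC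
  have h₃ := integrable_weight_mul_mul hw (hψx y) hm (hψC y) hmC
  have h₄ := integrable_weight_mul_mul hw hm hm hmC hmC
  have h₁₂ : Integrable (fun s => w s * (ψ x s * ψ y s) - w s * (ψ x s * m s)) ν := h₁.sub h₂
  have h₁₂₃ : Integrable (fun s => w s * (ψ x s * ψ y s) - w s * (ψ x s * m s)
      - w s * (ψ y s * m s)) ν := h₁₂.sub h₃
  calc ∫ s, w s * ((ψ x s - m s) * (ψ y s - m s)) ∂ν
      = ∫ s, (w s * (ψ x s * ψ y s) - w s * (ψ x s * m s) - w s * (ψ y s * m s)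
          + w s * (m s * m s)) ∂ν := by
        congr 1; funext s; ring
    _ = _ := by
        rw [integral_add h₁₂₃ h₄, integral_sub h₁₂ h₃, integral_sub h₁ h₂, hc, hleft, hright,
          hboth]

end GramCentering

instance : IsProbabilityMeasure unitMeasure :=
  ⟨by simp [unitMeasure]⟩

lemma ae_mem_Icc_unitMeasure : ∀ᵐ x ∂unitMeasure, x ∈ Icc (0:ℝ) 1 :=
  ae_restrict_mem measurableSet_Icc

def unitStep (x s : ℝ) : ℝ := if s ≤ x then 1 else 0

lemma measurable_unitStep : Measurable (Function.uncurry unitStep) :=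
  Measurable.ite (measurableSet_le measurable_snd measurable_fst) measurable_const
    measurable_const

lemma norm_unitStep_le (x s : ℝ) : ‖unitStep x s‖ ≤ 1 := by
  rw [unitStep]
  split_ifs <;> simp

lemma unitStep_mul_unitStep_left (x y s : ℝ) :
    unitStep x s * unitStep y s = unitStep (min x y) s := by
  simp only [unitStep, le_min_iff]
  split_ifs <;> simp_all

lemma unitStep_mul_unitStep_right (s x y : ℝ) :
    unitStep s x * unitStep s y = unitStep s (max x y) := by
  simp only [unitStep, max_le_iff]
  split_ifs <;> simp_all

lemma integral_unitStep_left {a : ℝ} (ha : a ∈ Icc (0:ℝ) 1) :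
    ∫ v, unitStep v a ∂unitMeasure = 1 - a := by
  have hind : (fun v => unitStep v a) = (Ici a).indicator 1 := by
    ext v; simp [unitStep, indicator_apply]
  have hset : Ici a ∩ Icc (0:ℝ) 1 = Icc a 1 := by
    ext v
    simp only [mem_inter_iff, mem_Ici, mem_Icc]
    exact ⟨fun h => ⟨h.1, h.2.2⟩, fun h => ⟨h.1, ha.1.trans h.1, h.2⟩⟩
  rw [hind, integral_indicator_one measurableSet_Ici, unitMeasure,
    measureReal_restrict_apply measurableSet_Ici, hset, Real.volume_real_Icc_of_le ha.2]

lemma integral_sq_mul_unitStep (f : ℝ → ℝ) {t : ℝ} (ht : t ≤ 1) :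
    ∫ s, f s ^ 2 * unitStep t s ∂unitMeasure = ∫ s in Icc (0:ℝ) t, f s ^ 2 := by
  have hind : (fun s => f s ^ 2 * unitStep t s) = (Iic t).indicator (fun s => f s ^ 2) := by
    ext s; simp [unitStep, indicator_apply]
  have hset : Iic t ∩ Icc (0:ℝ) 1 = Icc 0 t := by
    ext s
    simp only [mem_inter_iff, mem_Iic, mem_Icc]
    exact ⟨fun h => ⟨h.2.1, h.1⟩, fun h => ⟨h.2, h.1, h.2.trans ht⟩⟩
  rw [hind, integral_indicator measurableSet_Iic, unitMeasure,
    Measure.restrict_restrict measurableSet_Iic, hset]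

lemma integral_unitStep_mul_unitStep_sub_mul {x y : ℝ} (hx : x ∈ Icc (0:ℝ) 1)
    (hy : y ∈ Icc (0:ℝ) 1) :
    ∫ s, (unitStep s x - (1 - x)) * (unitStep s y - (1 - y)) ∂unitMeasure = min x y - x * y := by
  have hstep (a : ℝ) : MemLp (fun s => unitStep s a) 2 unitMeasure :=
    .of_bound (measurable_unitStep.comp
      (measurable_id.prodMk measurable_const)).aestronglyMeasurable 1
      (.of_forall fun s => norm_unitStep_le s a)
  have hmax : max x y ∈ Icc (0:ℝ) 1 := ⟨hx.1.trans (le_max_left x y), max_le hx.2 hy.2⟩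
  calc ∫ s, (unitStep s x - (1 - x)) * (unitStep s y - (1 - y)) ∂unitMeasure
      = ProbabilityTheory.covariance (fun s => unitStep s x) (fun s => unitStep s y)
          unitMeasure := by
        simp only [ProbabilityTheory.covariance, integral_unitStep_left hx,
          integral_unitStep_left hy]
    _ = (1 - max x y) - (1 - x) * (1 - y) := by
        rw [ProbabilityTheory.covariance_eq_sub (hstep x) (hstep y), integral_unitStep_left hx,
          integral_unitStep_left hy, ← integral_unitStep_left hmax]
        simp only [Pi.mul_apply, unitStep_mul_unitStep_right]
    _ = min x y - x * y := by linarith [min_add_max x y]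

def wienerKernel (f : ℝ → ℝ) (x s : ℝ) : ℝ := f s * (unitStep x s - (1 - s))

lemma isL2ProductDominated_wienerKernel {f : ℝ → ℝ} (hf : MemLp f 2 unitMeasure) :
    IsL2ProductDominated unitMeasure fun x s => (wienerKernel f x s : ℂ) := by
  refine ⟨?_, fun _ => 1, f, memLp_const 1, hf, ?_⟩
  · exact Complex.continuous_ofReal.comp_aestronglyMeasurable
      ((hf.1.comp_quasiMeasurePreserving Measure.quasiMeasurePreserving_snd).mul
        (measurable_unitStep.sub (by fun_prop)).aestronglyMeasurable)
  · filter_upwards [Measure.quasiMeasurePreserving_snd.ae ae_mem_Icc_unitMeasure] with p hp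
    rw [Complex.norm_real, wienerKernel, norm_mul, norm_one, one_mul]
    refine mul_le_of_le_one_right (norm_nonneg _) ?_
    rw [Real.norm_eq_abs, abs_le, unitStep]
    split_ifs <;> constructor <;> linarith [hp.1, hp.2]

lemma integral_wienerKernel_mul_wienerKernel {f F : ℝ → ℝ} (hf : MemLp f 2 unitMeasure)
    (hF : ∀ t, F t = ∫ s in Icc (0:ℝ) t, f s ^ 2) {x y : ℝ} (hx : x ≤ 1) (hy : y ≤ 1) :
    ∫ s, wienerKernel f x s * wienerKernel f y s ∂unitMeasure =
      F (min x y) - (∫ v in Icc (0:ℝ) 1, F (min x v)) - (∫ w in Icc (0:ℝ) 1, F (min w y))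
        + ∫ v in Icc (0:ℝ) 1, ∫ w in Icc (0:ℝ) 1, F (min v w) := by
  have hgram {x y : ℝ} (hxy : min x y ≤ 1) :
      ∫ s, f s ^ 2 * (unitStep x s * unitStep y s) ∂unitMeasure = F (min x y) := by
    simp only [unitStep_mul_unitStep_left, integral_sq_mul_unitStep f hxy, hF]
  have hrow {x : ℝ} (hx : x ≤ 1) :
      ∫ v, (∫ s, f s ^ 2 * (unitStep x s * unitStep v s) ∂unitMeasure) ∂unitMeasure =
        ∫ v in Icc (0:ℝ) 1, F (min x v) :=
    integral_congr_ae (.of_forall fun v => hgram (min_le_of_left_le hx))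
  have hcol : ∫ v, (∫ s, f s ^ 2 * (unitStep v s * unitStep y s) ∂unitMeasure) ∂unitMeasure =
      ∫ w in Icc (0:ℝ) 1, F (min w y) :=
    integral_congr_ae (.of_forall fun v => hgram (min_le_of_right_le hy))
  have hdouble :
      ∫ v, ∫ v', (∫ s, f s ^ 2 * (unitStep v s * unitStep v' s) ∂unitMeasure) ∂unitMeasure
        ∂unitMeasure = ∫ v in Icc (0:ℝ) 1, ∫ w in Icc (0:ℝ) 1, F (min v w) := by
    refine integral_congr_ae ?_
    filter_upwards [ae_mem_Icc_unitMeasure] with v hv using hrow hv.2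
  calc ∫ s, wienerKernel f x s * wienerKernel f y s ∂unitMeasure
      = ∫ s, f s ^ 2 * ((unitStep x s - ∫ v, unitStep v s ∂unitMeasure) *
          (unitStep y s - ∫ v, unitStep v s ∂unitMeasure)) ∂unitMeasure := by
        refine integral_congr_ae ?_
        filter_upwards [ae_mem_Icc_unitMeasure] with s hs
        rw [integral_unitStep_left hs, wienerKernel, wienerKernel]
        ring
    _ = _ := integral_weight_mul_centered_mul_centered hf.integrable_sq
          measurable_unitStep.stronglyMeasurable norm_unitStep_le (fun _ _ => rfl) x y
    _ = _ := by rw [hgram (min_le_of_left_le hx), hrow hx, hcol, hdouble]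

lemma integral_wienerKernel_mul_wienerKernel_swap (f : ℝ → ℝ) {x y : ℝ}
    (hx : x ∈ Icc (0:ℝ) 1) (hy : y ∈ Icc (0:ℝ) 1) :
    ∫ s, wienerKernel f s x * wienerKernel f s y ∂unitMeasure = f x * f y * (min x y - x * y) := by
  simp only [wienerKernel, mul_mul_mul_comm (f x), integral_const_mul]
  rw [integral_unitStep_mul_unitStep_sub_mul hx hy]

/-- Let `f ∈ L²(0,1)` and `F(t) = ∫₀ᵗ f(s)² ds`.  The integral operator with kernel
`Q₁(x,y) = F(min(x,y)) - ∫₀¹F(min(x,u))du - ∫₀¹F(min(v,y))dv + ∫₀¹∫₀¹F(min(u,v))dudv`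
(covariance of the centered stochastic integral `∫₀ˣ f dW`) and the integral operator
with kernel `Q₂(x,y) = f(x)f(y)(min(x,y) - xy)` (covariance of `f·B`) have the same
nonzero eigenvalues with multiplicities. -/
theorem statement7 (f : ℝ → ℝ) (hf : MemLp f 2 unitMeasure)
    (F : ℝ → ℝ) (hF : ∀ t, F t = ∫ s in Set.Icc (0:ℝ) t, (f s) ^ 2)
    (K₁ K₂ : Lp ℂ 2 unitMeasure →L[ℂ] Lp ℂ 2 unitMeasure)
    (hK₁ : ∀ u : Lp ℂ 2 unitMeasure, ∀ᵐ x ∂unitMeasure,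
      K₁ u x = ∫ y, ((F (min x y) - (∫ v in Set.Icc (0:ℝ) 1, F (min x v))
        - (∫ w in Set.Icc (0:ℝ) 1, F (min w y))
        + ∫ v in Set.Icc (0:ℝ) 1, ∫ w in Set.Icc (0:ℝ) 1, F (min v w) : ℝ) : ℂ)
        * u y ∂unitMeasure)
    (hK₂ : ∀ u : Lp ℂ 2 unitMeasure, ∀ᵐ x ∂unitMeasure,
      K₂ u x = ∫ y, ((f x * f y * (min x y - x * y) : ℝ) : ℂ) * u y ∂unitMeasure) :
    SameNonzeroEigenvalues K₁ K₂ := by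
  have hG := isL2ProductDominated_wienerKernel hf
  have h₁ : (K₁ : Lp ℂ 2 unitMeasure →ₗ[ℂ] Lp ℂ 2 unitMeasure) =
      kernelOperator hG * kernelOperator hG.swap := by
    refine eq_kernelOperator_mul hG hG.swap _ hK₁ ?_
    filter_upwards [ae_mem_Icc_unitMeasure] with x hx
    filter_upwards [ae_mem_Icc_unitMeasure] with y hy
    simp only [← Complex.ofReal_mul]
    rw [integral_complex_ofReal, integral_wienerKernel_mul_wienerKernel hf hF hx.2 hy.2]
  have h₂ : (K₂ : Lp ℂ 2 unitMeasure →ₗ[ℂ] Lp ℂ 2 unitMeasure) =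
      kernelOperator hG.swap * kernelOperator hG := by
    refine eq_kernelOperator_mul hG.swap hG _ hK₂ ?_
    filter_upwards [ae_mem_Icc_unitMeasure] with x hx
    filter_upwards [ae_mem_Icc_unitMeasure] with y hy
    simp only [← Complex.ofReal_mul]
    rw [integral_complex_ofReal, integral_wienerKernel_mul_wienerKernel_swap f hx hy]
  intro l hl m _
  rw [ContinuousLinearMap.toLinearMap_sub_smul_one_pow,
    ContinuousLinearMap.toLinearMap_sub_smul_one_pow, h₁, h₂]
  exact Module.End.rank_ker_pow_mul_sub_smul_eq _ _ hl m
end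
end

section
/- Let α > 1/2, let T_α be the Riemann–Liouville operator on L²(0,1), (T_α u)(x) = α ∫₀ˣ (x − t)^{α−1} u(t) dt, with adjoint T_α*, and let P be the orthogonal projection onto constants, (Pu)(x) = ∫₀¹ u(t) dt. Then the operators T_α (I − P) T_α* (the covariance operator of the Riemann–Liouville bridge R_α°(x) = R_α(x) − x^α R_α(1)) and (I − P) T_α T_α* (I − P) (the covariance operator of the centered Riemann–Liouville process) have the same nonzero eigenvalues with multiplicities. -/
/-!
Let `J u = u(1 - ·)`. The Riemann–Liouville kernel `α (x - t)^(α-1) 1_{t ≤ x}` is unchanged by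
`(x, t) ↦ (1 - t, 1 - x)`, so `J T_α J = T_α*`; and `J` commutes with `P`. Hence
`T_α (I - P) T_α*` is conjugate by the involution `J` to `T_α* (I - P) T_α = (T_α* Q)(Q T_α)`
with `Q = I - P`, and `XY`, `YX` have the same nonzero generalized eigenspace dimensions
(`Y` maps `ker (XY - λ)^m` injectively into `ker (YX - λ)^m` when `λ ≠ 0`), which turns it into
`(Q T_α)(T_α* Q)`.
-/

open MeasureTheory

noncomputable section

open ComplexConjugate
open scoped InnerProductSpace

section SwapPrinciple

lemma SemiconjBy.mul_sub_smul_one {K A : Type*} [CommRing K] [Ring A] [Algebra K A]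
    (x y : A) (c : K) : SemiconjBy y (x * y - c • 1) (y * x - c • 1) := by
  simp only [SemiconjBy, mul_sub, sub_mul, mul_assoc, mul_smul_comm, smul_mul_assoc, mul_one,
    one_mul]

variable {K V : Type*} [Field K] [AddCommGroup V] [Module K V]

open LinearMap in
lemma Module.End.rank_ker_mul_sub_smul_pow_le (X Y : Module.End K V) {c : K} (hc : c ≠ 0)
    (m : ℕ) :
    Module.rank K (ker ((X * Y - c • 1) ^ m)) ≤ Module.rank K (ker ((Y * X - c • 1) ^ m)) := by
  have hmaps : ∀ u ∈ ker ((X * Y - c • 1) ^ m), Y u ∈ ker ((Y * X - c • 1) ^ m) := by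
    intro u hu
    rw [mem_ker, ← Module.End.mul_apply, ← ((SemiconjBy.mul_sub_smul_one X Y c).pow_right m).eq,
      Module.End.mul_apply, hu, map_zero]
  refine rank_le_of_injective (Y.restrict hmaps) ((injective_iff_map_eq_zero _).2 ?_)
  rintro ⟨u, hu⟩ hYu
  replace hYu : Y u = 0 := congrArg Subtype.val hYu
  have hpow : ∀ k : ℕ, ((X * Y - c • 1) ^ k) u = (-c) ^ k • u := by
    intro k
    induction k with
    | zero => simp
    | succ k ih =>
      rw [pow_succ, Module.End.mul_apply, LinearMap.sub_apply, Module.End.mul_apply, hYu,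
        map_zero, zero_sub, LinearMap.smul_apply, Module.End.one_apply, ← neg_smul, map_smul, ih,
        smul_smul, pow_succ']
  have : (-c) ^ m • u = 0 := (hpow m).symm.trans hu
  exact Subtype.ext ((smul_eq_zero.1 this).resolve_left (pow_ne_zero _ (neg_ne_zero.2 hc)))

end SwapPrinciple

section SameNonzeroEigenvalues

variable {H : Type*} [NormedAddCommGroup H] [NormedSpace ℂ H]

lemma SameNonzeroEigenvalues.trans {A B C : H →L[ℂ] H} (hAB : SameNonzeroEigenvalues A B)
    (hBC : SameNonzeroEigenvalues B C) : SameNonzeroEigenvalues A C :=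
  fun l hl m hm => (hAB l hl m hm).trans (hBC l hl m hm)

lemma sameNonzeroEigenvalues_mul_comm (X Y : H →L[ℂ] H) :
    SameNonzeroEigenvalues (X * Y) (Y * X) := by
  intro l hl m _
  have hcoe : ∀ A : H →L[ℂ] H,
      (((A - l • 1) ^ m : H →L[ℂ] H) : H →ₗ[ℂ] H) = ((A : H →ₗ[ℂ] H) - l • 1) ^ m := by
    intro A
    rw [← ContinuousLinearMap.toLinearMapRingHom_apply, map_pow]
    rfl
  rw [hcoe, hcoe, ContinuousLinearMap.toLinearMap_mul, ContinuousLinearMap.toLinearMap_mul]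
  exact le_antisymm (Module.End.rank_ker_mul_sub_smul_pow_le _ _ hl m)
    (Module.End.rank_ker_mul_sub_smul_pow_le _ _ hl m)

lemma sameNonzeroEigenvalues_conj {J : H →L[ℂ] H} (hJ : J * J = 1) (A : H →L[ℂ] H) :
    SameNonzeroEigenvalues A (J * (A * J)) := by
  simpa [mul_assoc, hJ] using sameNonzeroEigenvalues_mul_comm (A * J) J

lemma sameNonzeroEigenvalues_of_involution {J T S Q : H →L[ℂ] H} (hJ : J * J = 1)
    (hT : J * (T * J) = S) (hQJ : J * (Q * J) = Q) (hQ : IsIdempotentElem Q) :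
    SameNonzeroEigenvalues (T * (Q * S)) (Q * (T * (S * Q))) := by
  have hJJ : ∀ A, J * (J * A) = A := fun A => by rw [← mul_assoc, hJ, one_mul]
  have hS : J * (S * J) = T := by simp only [← hT, mul_assoc, hJJ, hJ, mul_one]
  have hconj : J * ((T * (Q * S)) * J) = (S * Q) * (Q * T) :=
    calc J * ((T * (Q * S)) * J)
        = (J * (T * J)) * ((J * (Q * J)) * (J * (S * J))) := by simp only [mul_assoc, hJJ]
      _ = (S * Q) * (Q * T) := by rw [hT, hQJ, hS, mul_assoc, ← mul_assoc Q, hQ.eq]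
  refine (sameNonzeroEigenvalues_conj hJ _).trans ?_
  rw [hconj]
  exact mul_assoc Q T _ ▸ sameNonzeroEigenvalues_mul_comm (S * Q) (Q * T)

end SameNonzeroEigenvalues

section OperatorsOnL2

variable {X : Type*} [MeasurableSpace X] {μ : Measure X}

def HasKernel (T : Lp ℂ 2 μ →L[ℂ] Lp ℂ 2 μ) (K : X × X → ℂ) : Prop :=
  ∀ u : Lp ℂ 2 μ, ∀ᵐ x ∂μ, T u x = ∫ t, K (x, t) * u t ∂μ

def IsMeanOperator (P : Lp ℂ 2 μ →L[ℂ] Lp ℂ 2 μ) : Prop :=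
  ∀ u : Lp ℂ 2 μ, ∀ᵐ x ∂μ, P u x = ∫ t, u t ∂μ

lemma IsMeanOperator.isIdempotentElem [IsProbabilityMeasure μ] {P : Lp ℂ 2 μ →L[ℂ] Lp ℂ 2 μ}
    (hP : IsMeanOperator P) : IsIdempotentElem P := by
  refine ContinuousLinearMap.ext fun u => Lp.ext ?_
  have hmean : ∫ t, P u t ∂μ = ∫ t, u t ∂μ := by
    rw [integral_congr_ae (hP u), integral_const, probReal_univ, one_smul]
  filter_upwards [hP (P u), hP u] with x h1 h2
  rw [mul_apply_eq_comp, h1, hmean, h2]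

lemma memLp_conj_mul_prod (u v : Lp ℂ 2 μ) :
    MemLp (fun p : X × X => conj (u p.1) * v p.2) 2 (μ.prod μ) := by
  have hu := Lp.aestronglyMeasurable u
  have hv := Lp.aestronglyMeasurable v
  have hmeas : AEStronglyMeasurable (fun p : X × X => conj (u p.1) * v p.2) (μ.prod μ) :=
    (continuous_star.comp_aestronglyMeasurable hu.comp_fst).mul hv.comp_snd
  rw [memLp_two_iff_integrable_sq_norm hmeas]
  have hu2 : Integrable (fun x => ‖u x‖ ^ 2) μ :=
    (memLp_two_iff_integrable_sq_norm hu).1 (Lp.memLp u)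
  have hv2 : Integrable (fun x => ‖v x‖ ^ 2) μ :=
    (memLp_two_iff_integrable_sq_norm hv).1 (Lp.memLp v)
  refine (hu2.mul_prod hv2).congr (.of_forall fun p => ?_)
  simp only [norm_mul, mul_pow, RCLike.norm_conj]

variable [SFinite μ]

lemma HasKernel.inner_eq_integral {T : Lp ℂ 2 μ →L[ℂ] Lp ℂ 2 μ} {K : X × X → ℂ}
    (hT : HasKernel T K) (hK : MemLp K 2 (μ.prod μ)) (u v : Lp ℂ 2 μ) :
    ⟪u, T v⟫_ℂ = ∫ p, conj (u p.1) * v p.2 * K p ∂(μ.prod μ) := by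
  have hint : Integrable (fun p : X × X => conj (u p.1) * v p.2 * K p) (μ.prod μ) :=
    (memLp_conj_mul_prod u v).integrable_mul hK
  rw [integral_prod _ hint, L2.inner_def]
  refine integral_congr_ae ?_
  filter_upwards [hT v] with x hx
  rw [RCLike.inner_apply', hx, ← integral_const_mul]
  exact integral_congr_ae (.of_forall fun t => by ring)

lemma HasKernel.adjoint_eq {T S : Lp ℂ 2 μ →L[ℂ] Lp ℂ 2 μ} {K K' : X × X → ℂ}
    (hT : HasKernel T K) (hS : HasKernel S K') (hK : MemLp K 2 (μ.prod μ))
    (hK' : K' =ᵐ[μ.prod μ] fun p => conj (K p.swap)) :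
    ContinuousLinearMap.adjoint T = S := by
  have hK'mem : MemLp K' 2 (μ.prod μ) :=
    (hK.comp_measurePreserving Measure.measurePreserving_swap).star.ae_eq hK'.symm
  refine ((ContinuousLinearMap.eq_adjoint_iff S T).2 fun u v => ?_).symm
  rw [← inner_conj_symm, hS.inner_eq_integral hK'mem, hT.inner_eq_integral hK, ← integral_conj,
    ← integral_prod_swap (fun p => conj (u p.1) * v p.2 * K p)]
  refine integral_congr_ae ?_
  filter_upwards [hK'] with p hp
  simp only [hp, map_mul, RCLike.conj_conj, Prod.fst_swap, Prod.snd_swap]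
  ring

end OperatorsOnL2

section Composition

variable {X : Type*} [MeasurableSpace X] {μ : Measure X} (σ : X ≃ᵐ X)
  (hσ : MeasurePreserving σ μ μ)

def compL2 : Lp ℂ 2 μ →L[ℂ] Lp ℂ 2 μ :=
  (Lp.compMeasurePreservingₗᵢ ℂ σ hσ).toContinuousLinearMap

lemma coeFn_compL2 (u : Lp ℂ 2 μ) : compL2 σ hσ u =ᵐ[μ] u ∘ σ :=
  Lp.coeFn_compMeasurePreserving u hσ

lemma compL2_mul_self (hσσ : ∀ x, σ (σ x) = x) : compL2 σ hσ * compL2 σ hσ = 1 := by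
  ext u : 1
  refine Lp.ext ?_
  filter_upwards [coeFn_compL2 σ hσ (compL2 σ hσ u),
    hσ.quasiMeasurePreserving.ae (coeFn_compL2 σ hσ u)] with x h1 h2
  simp [h1, h2, hσσ]

lemma HasKernel.compL2_conj (hσσ : ∀ x, σ (σ x) = x) {T : Lp ℂ 2 μ →L[ℂ] Lp ℂ 2 μ}
    {K : X × X → ℂ} (hT : HasKernel T K) :
    HasKernel (compL2 σ hσ * (T * compL2 σ hσ)) fun p => K (σ p.1, σ p.2) := by
  intro u
  filter_upwards [coeFn_compL2 σ hσ (T (compL2 σ hσ u)),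
    hσ.quasiMeasurePreserving.ae (hT (compL2 σ hσ u))] with x h1 h2
  rw [mul_apply_eq_comp, mul_apply_eq_comp, h1, Function.comp_apply, h2,
    ← hσ.integral_comp' fun t => K (σ x, σ t) * u t]
  refine integral_congr_ae ?_
  filter_upwards [coeFn_compL2 σ hσ u] with t ht
  simp [ht, hσσ]

variable {σ hσ} {P : Lp ℂ 2 μ →L[ℂ] Lp ℂ 2 μ}

lemma IsMeanOperator.compL2_mul (hP : IsMeanOperator P) : compL2 σ hσ * P = P := by
  ext u : 1
  refine Lp.ext ?_
  filter_upwards [coeFn_compL2 σ hσ (P u), hσ.quasiMeasurePreserving.ae (hP u), hP u]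
    with x h1 h2 h3
  rw [mul_apply_eq_comp, h1, Function.comp_apply, h2, h3]

lemma IsMeanOperator.mul_compL2 (hP : IsMeanOperator P) : P * compL2 σ hσ = P := by
  ext u : 1
  refine Lp.ext ?_
  have hmean : ∫ t, compL2 σ hσ u t ∂μ = ∫ t, u t ∂μ := by
    rw [integral_congr_ae (coeFn_compL2 σ hσ u)]
    exact hσ.integral_comp' u
  filter_upwards [hP (compL2 σ hσ u), hP u] with x h1 h2
  rw [mul_apply_eq_comp, h1, hmean, h2]

end Composition

section RiemannLiouville

instance inst_s9 : IsProbabilityMeasure unitMeasure :=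
  ⟨by rw [unitMeasure, Measure.restrict_apply_univ, Real.volume_Icc, sub_zero, ENNReal.ofReal_one]⟩

lemma measurePreserving_one_sub :
    MeasurePreserving (MeasurableEquiv.subLeft (1 : ℝ)) unitMeasure unitMeasure := by
  have h := (volume.measurePreserving_sub_left (1 : ℝ)).restrict_preimage
    (measurableSet_Icc (a := (0 : ℝ)) (b := 1))
  rwa [Set.preimage_const_sub_Icc, sub_zero, sub_self] at h

lemma unitMeasure_restrict_Icc {x : ℝ} (hx : x ≤ 1) :
    unitMeasure.restrict (Set.Icc 0 x) = volume.restrict (Set.Icc 0 x) := by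
  rw [unitMeasure, Measure.restrict_restrict measurableSet_Icc,
    Set.inter_eq_self_of_subset_left (Set.Icc_subset_Icc le_rfl hx)]

def rlKernel (α : ℝ) (p : ℝ × ℝ) : ℂ :=
  if 0 ≤ p.2 ∧ p.2 ≤ p.1 then ((α * (p.1 - p.2) ^ (α - 1) : ℝ) : ℂ) else 0

lemma measurable_rlKernel (α : ℝ) : Measurable (rlKernel α) :=
  Measurable.ite ((measurableSet_le measurable_const measurable_snd).inter
      (measurableSet_le measurable_snd measurable_fst))
    (by fun_prop) measurable_const

lemma sq_norm_rlKernel (α x t : ℝ) :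
    ‖rlKernel α (x, t)‖ ^ 2 =
      (Set.Icc 0 x).indicator (fun t => α ^ 2 * (x - t) ^ (2 * α - 2)) t := by
  by_cases h : 0 ≤ t ∧ t ≤ x
  · rw [rlKernel, if_pos h, Set.indicator_of_mem (Set.mem_Icc.2 h), Complex.norm_real,
      Real.norm_eq_abs, sq_abs, mul_pow, ← Real.rpow_mul_natCast (sub_nonneg.2 h.2)]
    congr 2
    push_cast
    ring
  · rw [rlKernel, if_neg h, Set.indicator_of_notMem (by rwa [Set.mem_Icc])]
    simp

variable {α : ℝ}

lemma intervalIntegrable_sq_rlKernel (hα : 1 / 2 < α) (x : ℝ) :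
    IntervalIntegrable (fun t : ℝ => α ^ 2 * (x - t) ^ (2 * α - 2)) volume 0 x := by
  have h := intervalIntegral.intervalIntegrable_rpow' (a := 0) (b := x) (r := 2 * α - 2)
    (by linarith)
  simpa using (h.comp_sub_left x).symm.const_mul (α ^ 2)

lemma integral_sq_norm_rlKernel {x : ℝ} (hx : x ∈ Set.Icc (0 : ℝ) 1) (hα : 1 / 2 < α) :
    ∫ t, ‖rlKernel α (x, t)‖ ^ 2 ∂unitMeasure = α ^ 2 * (x ^ (2 * α - 1) / (2 * α - 1)) := by
  simp_rw [sq_norm_rlKernel]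
  rw [integral_indicator measurableSet_Icc, unitMeasure_restrict_Icc hx.2,
    integral_Icc_eq_integral_Ioc, ← intervalIntegral.integral_of_le hx.1,
    intervalIntegral.integral_const_mul,
    intervalIntegral.integral_comp_sub_left (fun s : ℝ => s ^ (2 * α - 2)) x, sub_self, sub_zero,
    integral_rpow (Or.inl (by linarith)), Real.zero_rpow (by linarith)]
  ring_nf

lemma memLp_rlKernel (hα : 1 / 2 < α) : MemLp (rlKernel α) 2 (unitMeasure.prod unitMeasure) := by
  have hmeas := (measurable_rlKernel α).aestronglyMeasurable (μ := unitMeasure.prod unitMeasure)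
  have hsq : AEStronglyMeasurable (fun p => ‖rlKernel α p‖ ^ 2) (unitMeasure.prod unitMeasure) :=
    hmeas.norm.pow 2
  have hunit : ∀ᵐ x ∂unitMeasure, x ∈ Set.Icc (0 : ℝ) 1 := ae_restrict_mem measurableSet_Icc
  rw [memLp_two_iff_integrable_sq_norm hmeas, integrable_prod_iff hsq]
  constructor
  · filter_upwards [hunit] with x hx
    simp_rw [sq_norm_rlKernel]
    refine (integrable_indicator_iff measurableSet_Icc).2 ?_
    rw [IntegrableOn, unitMeasure_restrict_Icc hx.2, ← IntegrableOn,
      integrableOn_Icc_iff_integrableOn_Ioc, ← intervalIntegrable_iff_integrableOn_Ioc_of_le hx.1]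
    exact intervalIntegrable_sq_rlKernel hα x
  · have hpos : 0 < 2 * α - 1 := by linarith
    refine (integrable_const (α ^ 2 / (2 * α - 1))).mono' hsq.norm.integral_prod_right' ?_
    filter_upwards [hunit] with x hx
    simp_rw [norm_pow, norm_norm]
    rw [integral_sq_norm_rlKernel hx hα, ← mul_div_assoc,
      Real.norm_of_nonneg (by have := hx.1; positivity)]
    exact div_le_div_of_nonneg_right
      (mul_le_of_le_one_right (sq_nonneg α) (Real.rpow_le_one hx.1 hx.2 (by linarith))) hpos.le

lemma hasKernel_rlKernel {T : Lp ℂ 2 unitMeasure →L[ℂ] Lp ℂ 2 unitMeasure}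
    (hT : ∀ u : Lp ℂ 2 unitMeasure, ∀ᵐ x ∂unitMeasure,
      T u x = ∫ t in Set.Icc (0:ℝ) x, ((α * (x - t) ^ (α - 1) : ℝ) : ℂ) * u t ∂unitMeasure) :
    HasKernel T (rlKernel α) := by
  intro u
  filter_upwards [hT u] with x hx
  rw [hx, ← integral_indicator measurableSet_Icc]
  congr 1 with t
  by_cases h : 0 ≤ t ∧ t ≤ x
  · rw [rlKernel, if_pos h, Set.indicator_of_mem (Set.mem_Icc.2 h)]
  · rw [rlKernel, if_neg h, Set.indicator_of_notMem (by rwa [Set.mem_Icc]), zero_mul]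

lemma rlKernel_one_sub_ae_eq (α : ℝ) :
    (fun p : ℝ × ℝ => rlKernel α (1 - p.1, 1 - p.2)) =ᵐ[unitMeasure.prod unitMeasure]
      fun p => conj (rlKernel α p.swap) := by
  have hsq : ∀ᵐ p ∂unitMeasure.prod unitMeasure, p ∈ Set.Icc (0:ℝ) 1 ×ˢ Set.Icc (0:ℝ) 1 := by
    rw [unitMeasure, Measure.prod_restrict]
    exact ae_restrict_mem (measurableSet_Icc.prod measurableSet_Icc)
  filter_upwards [hsq] with ⟨x, t⟩ ⟨⟨hx0, hx1⟩, ⟨ht0, ht1⟩⟩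
  simp only [rlKernel, Prod.swap_prod_mk, apply_ite conj, map_zero, Complex.conj_ofReal]
  refine if_congr ⟨fun h => ⟨hx0, by linarith [h.2]⟩, fun h => ⟨by linarith, by linarith [h.2]⟩⟩
    (by rw [sub_sub_sub_cancel_left]) rfl

end RiemannLiouville

/-- For `α > 1/2`, with `T_α` the Riemann–Liouville operator on `L²(0,1)` and `P` the
projection onto constants, the operators `T_α (I - P) T_α*` (covariance of the
Riemann–Liouville bridge) and `(I - P) T_α T_α* (I - P)` (covariance of the centered
Riemann–Liouville process) have the same nonzero eigenvalues with multiplicities. -/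
theorem statement9 (α : ℝ) (hα : 1 / 2 < α)
    (Tα P : Lp ℂ 2 unitMeasure →L[ℂ] Lp ℂ 2 unitMeasure)
    (hTα : ∀ u : Lp ℂ 2 unitMeasure, ∀ᵐ x ∂unitMeasure,
      Tα u x = ∫ t in Set.Icc (0:ℝ) x, ((α * (x - t) ^ (α - 1) : ℝ) : ℂ)
        * u t ∂unitMeasure)
    (hP : ∀ u : Lp ℂ 2 unitMeasure, ∀ᵐ x ∂unitMeasure,
      P u x = ∫ t, u t ∂unitMeasure) :
    SameNonzeroEigenvalues
      (Tα ∘L (1 - P) ∘L ContinuousLinearMap.adjoint Tα)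
      ((1 - P) ∘L Tα ∘L ContinuousLinearMap.adjoint Tα ∘L (1 - P)) := by
  set J := compL2 _ measurePreserving_one_sub
  have hσσ : ∀ x : ℝ, MeasurableEquiv.subLeft 1 (MeasurableEquiv.subLeft 1 x) = x :=
    sub_sub_cancel 1
  have hJ : J * J = 1 := compL2_mul_self _ _ hσσ
  have hJTJ : J * (Tα * J) = ContinuousLinearMap.adjoint Tα :=
    ((hasKernel_rlKernel hTα).adjoint_eq ((hasKernel_rlKernel hTα).compL2_conj _ _ hσσ)
      (memLp_rlKernel hα) (rlKernel_one_sub_ae_eq α)).symm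
  have hJQJ : J * ((1 - P) * J) = 1 - P := by
    rw [sub_mul, one_mul, mul_sub, hJ, IsMeanOperator.mul_compL2 hP,
      IsMeanOperator.compL2_mul hP]
  simp only [← ContinuousLinearMap.mul_def]
  exact sameNonzeroEigenvalues_of_involution hJ hJTJ hJQJ
    (IsMeanOperator.isIdempotentElem hP).one_sub
end
end

section
/- For every real number a, the operators 𝐓(𝐈 − a𝐏)(𝐈 − a𝐏)𝐓* (the covariance operator of 𝐁_a(x) = 𝐖(x) − a𝐖(1)∏ₖxₖ) and (𝐈 − a𝐏)𝐓𝐓*(𝐈 − a𝐏) (the covariance operator of 𝐖_a(x) = 𝐖(x) − a∫_{[0,1]^d}𝐖(y)dy) on L²([0,1]^d) have the same nonzero eigenvalues with multiplicities. -/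
open MeasureTheory

noncomputable section

/-! ### Abstract algebraic lemmas -/

section Algebra

variable {H : Type*} [NormedAddCommGroup H] [NormedSpace ℂ H]

lemma aux_intertwine (A B : H →L[ℂ] H) (l : ℂ) (m : ℕ) :
    B * (A * B - l • 1) ^ m = (B * A - l • 1) ^ m * B := by
  induction m with
  | zero => simp
  | succ n ih =>
    rw [pow_succ, ← mul_assoc, ih, pow_succ, mul_assoc, mul_assoc]
    congr 1
    simp [mul_sub, sub_mul, mul_assoc, mul_smul_comm, smul_mul_assoc]

lemma aux_inj_on_ker (A B : H →L[ℂ] H) (l : ℂ) (hl : l ≠ 0) (m : ℕ) :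
    ∀ x : H, B x = 0 → ((A * B - l • 1) ^ m) x = 0 → x = 0 := by
  induction m with
  | zero => intro x _ hx; simpa using hx
  | succ n ih =>
    intro x hBx hx
    have hy : ((A * B - l • 1) ^ n) ((A * B - l • 1) x) = 0 := by
      rw [pow_succ] at hx
      rw [← ContinuousLinearMap.mul_apply]
      exact hx
    have hBy : B ((A * B - l • 1) x) = 0 := by
      have := congrArg (fun z : H →L[ℂ] H => z x) (aux_intertwine A B l 1)
      simp only [pow_one, ContinuousLinearMap.mul_apply] at this
      rw [this]
      simp [hBx]
    have hz : (A * B - l • 1) x = 0 := ih _ hBy hy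
    have : A (B x) - l • x = 0 := by
      simpa [ContinuousLinearMap.sub_apply, ContinuousLinearMap.mul_apply,
        ContinuousLinearMap.smul_apply] using hz
    rw [hBx] at this
    simp only [map_zero, zero_sub, neg_eq_zero] at this
    exact (smul_eq_zero.mp this).resolve_left hl

lemma aux_rank_le_mul (A B : H →L[ℂ] H) (l : ℂ) (hl : l ≠ 0) (m : ℕ) :
    Module.rank ℂ (LinearMap.ker ((((A * B - l • 1) ^ m : H →L[ℂ] H) : H →ₗ[ℂ] H))) ≤
    Module.rank ℂ (LinearMap.ker ((((B * A - l • 1) ^ m : H →L[ℂ] H) : H →ₗ[ℂ] H))) := by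
  have hmap : ∀ x ∈ LinearMap.ker ((((A * B - l • 1) ^ m : H →L[ℂ] H) : H →ₗ[ℂ] H)),
      B x ∈ LinearMap.ker ((((B * A - l • 1) ^ m : H →L[ℂ] H) : H →ₗ[ℂ] H)) := by
    intro x hx
    rw [LinearMap.mem_ker, ContinuousLinearMap.coe_coe] at hx ⊢
    have := congrArg (fun z : H →L[ℂ] H => z x) (aux_intertwine A B l m)
    simp only [ContinuousLinearMap.mul_apply] at this
    rw [← this, hx, map_zero]
  let f := (B : H →ₗ[ℂ] H).restrict hmap
  have hinj : Function.Injective f := by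
    rintro ⟨x, hx⟩ ⟨y, hy⟩ hxy
    have : B (x - y) = 0 := by
      have := congrArg Subtype.val hxy
      simp only [f, LinearMap.restrict_apply] at this
      rw [map_sub]
      simpa [sub_eq_zero] using this
    have hker : ((A * B - l • 1) ^ m) (x - y) = 0 := by
      rw [LinearMap.mem_ker, ContinuousLinearMap.coe_coe] at hx hy
      simp [map_sub, hx, hy]
    have := aux_inj_on_ker A B l hl m _ this hker
    exact Subtype.ext (sub_eq_zero.mp this)
  exact LinearMap.rank_le_of_injective f hinj

lemma aux_sameNZ_mul (A B : H →L[ℂ] H) :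
    SameNonzeroEigenvalues (A * B) (B * A) := by
  intro l hl m _
  exact le_antisymm (aux_rank_le_mul A B l hl m) (aux_rank_le_mul B A l hl m)

lemma aux_rank_le_conj (R X : H →L[ℂ] H) (hR : R * R = 1) (l : ℂ) (m : ℕ) :
    Module.rank ℂ (LinearMap.ker ((((R * X * R - l • 1) ^ m : H →L[ℂ] H) : H →ₗ[ℂ] H))) ≤
    Module.rank ℂ (LinearMap.ker ((((X - l • 1) ^ m : H →L[ℂ] H) : H →ₗ[ℂ] H))) := by
  have hconj : (R * X * R - l • 1) ^ m = R * (X - l • 1) ^ m * R := by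
    have h1 : R * X * R - l • 1 = R * (X - l • 1) * R := by
      simp [mul_sub, sub_mul, mul_assoc, mul_smul_comm, smul_mul_assoc, hR]
    rw [h1]
    induction m with
    | zero => simp [hR]
    | succ n ih =>
      rw [pow_succ, ih, pow_succ]
      simp only [mul_assoc]
      rw [← mul_assoc R R, hR, one_mul]
  have hmap : ∀ x ∈ LinearMap.ker ((((R * X * R - l • 1) ^ m : H →L[ℂ] H) : H →ₗ[ℂ] H)),
      R x ∈ LinearMap.ker ((((X - l • 1) ^ m : H →L[ℂ] H) : H →ₗ[ℂ] H)) := by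
    intro x hx
    rw [LinearMap.mem_ker, ContinuousLinearMap.coe_coe] at hx ⊢
    have h2 : (X - l • 1) ^ m * R = R * (R * X * R - l • 1) ^ m := by
      rw [hconj, ← mul_assoc, ← mul_assoc, hR, one_mul]
    have := congrArg (fun z : H →L[ℂ] H => z x) h2
    simp only [ContinuousLinearMap.mul_apply] at this
    rw [this, hx, map_zero]
  let f := (R : H →ₗ[ℂ] H).restrict hmap
  have hinj : Function.Injective f := by
    rintro ⟨x, hx⟩ ⟨y, hy⟩ hxy
    have h3 : R x = R y := congrArg Subtype.val hxy
    have h6 : R (R x) = R (R y) := congrArg R h3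
    have h4 := congrArg (fun z : H →L[ℂ] H => z x) hR
    have h5 := congrArg (fun z : H →L[ℂ] H => z y) hR
    simp only [ContinuousLinearMap.mul_apply, ContinuousLinearMap.one_apply] at h4 h5
    refine Subtype.ext ?_
    show x = y
    rw [← h4, ← h5]
    exact h6
  exact LinearMap.rank_le_of_injective f hinj

lemma aux_sameNZ_conj (R X : H →L[ℂ] H) (hR : R * R = 1) :
    SameNonzeroEigenvalues (R * X * R) X := by
  intro l hl m hm
  refine le_antisymm (aux_rank_le_conj R X hR l m) ?_
  have hX : X = R * (R * X * R) * R := by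
    rw [← mul_assoc, ← mul_assoc, hR, one_mul, mul_assoc, hR, mul_one]
  calc Module.rank ℂ (LinearMap.ker ((((X - l • 1) ^ m : H →L[ℂ] H) : H →ₗ[ℂ] H)))
      = Module.rank ℂ (LinearMap.ker ((((R * (R * X * R) * R - l • 1) ^ m : H →L[ℂ] H) : H →ₗ[ℂ] H))) := by rw [← hX]
    _ ≤ Module.rank ℂ (LinearMap.ker ((((R * X * R - l • 1) ^ m : H →L[ℂ] H) : H →ₗ[ℂ] H))) :=
        aux_rank_le_conj R (R * X * R) hR l m

end Algebra

/-! ### The reflection of the cube -/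

def refl1 : ℝ → ℝ := fun t => 1 - t

lemma measPres1 : MeasurePreserving refl1
    (volume.restrict (Set.Icc (0:ℝ) 1)) (volume.restrict (Set.Icc (0:ℝ) 1)) := by
  have hmeas : Measurable refl1 := (measurable_id.const_sub 1)
  refine ⟨hmeas, ?_⟩
  have hpre : refl1 ⁻¹' (Set.Icc (0:ℝ) 1) = Set.Icc (0:ℝ) 1 := by
    ext t
    simp only [Set.mem_preimage, Set.mem_Icc, refl1]
    constructor <;> (rintro ⟨h1, h2⟩; constructor <;> linarith)
  have hvol : Measure.map refl1 volume = volume :=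
    (Measure.measurePreserving_sub_left volume 1).map_eq
  calc Measure.map refl1 (volume.restrict (Set.Icc (0:ℝ) 1))
      = Measure.map refl1 (volume.restrict (refl1 ⁻¹' Set.Icc (0:ℝ) 1)) := by rw [hpre]
    _ = (Measure.map refl1 volume).restrict (Set.Icc (0:ℝ) 1) :=
        (Measure.restrict_map hmeas measurableSet_Icc).symm
    _ = volume.restrict (Set.Icc (0:ℝ) 1) := by rw [hvol]

def cubeRefl (d : ℕ) : (Fin d → ℝ) → (Fin d → ℝ) := fun x i => 1 - x i

lemma cubeRefl_involutive (d : ℕ) : ∀ x, cubeRefl d (cubeRefl d x) = x := by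
  intro x; funext i; simp [cubeRefl]

lemma measPres (d : ℕ) : MeasurePreserving (cubeRefl d) (cubeMeasure d) (cubeMeasure d) :=
  measurePreserving_pi _ _ (fun _ => measPres1)

def cubeReflEquiv (d : ℕ) : (Fin d → ℝ) ≃ᵐ (Fin d → ℝ) where
  toFun := cubeRefl d
  invFun := cubeRefl d
  left_inv := cubeRefl_involutive d
  right_inv := cubeRefl_involutive d
  measurable_toFun := (measPres d).measurable
  measurable_invFun := (measPres d).measurable

lemma cubeRefl_emb (d : ℕ) : MeasurableEmbedding (cubeRefl d) :=
  (cubeReflEquiv d).measurableEmbedding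

lemma preimage_Icc_left (d : ℕ) (x : Fin d → ℝ) :
    cubeRefl d ⁻¹' Set.Icc (cubeRefl d x) 1 = Set.Icc 0 x := by
  ext y
  simp only [Set.mem_preimage, Set.mem_Icc, Pi.le_def, cubeRefl, Pi.one_apply, Pi.zero_apply]
  constructor <;> (rintro ⟨h1, h2⟩; constructor <;> intro i
    <;> (have := h1 i; have := h2 i; linarith))

/-! ### The main theorem -/

/-- For every real `a`, the operators `𝐓(𝐈-a𝐏)(𝐈-a𝐏)𝐓*` (covariance of
`𝐁_a = 𝐖 - a𝐖(1)∏xₖ`) and `(𝐈-a𝐏)𝐓𝐓*(𝐈-a𝐏)` (covariance of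
`𝐖_a = 𝐖 - a∫𝐖`) have the same nonzero eigenvalues with multiplicities. -/
theorem statement11 (d : ℕ) (hd : 1 ≤ d) (a : ℝ)
    (T Tstar P : Lp ℂ 2 (cubeMeasure d) →L[ℂ] Lp ℂ 2 (cubeMeasure d))
    (hT : ∀ u : Lp ℂ 2 (cubeMeasure d), ∀ᵐ x ∂(cubeMeasure d),
      T u x = ∫ y in Set.Icc 0 x, u y ∂(cubeMeasure d))
    (hTstar : ∀ u : Lp ℂ 2 (cubeMeasure d), ∀ᵐ x ∂(cubeMeasure d),
      Tstar u x = ∫ y in Set.Icc x 1, u y ∂(cubeMeasure d))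
    (hP : ∀ u : Lp ℂ 2 (cubeMeasure d), ∀ᵐ x ∂(cubeMeasure d),
      P u x = ∫ y, u y ∂(cubeMeasure d)) :
    SameNonzeroEigenvalues
      (T ∘L (1 - (a : ℂ) • P) ∘L (1 - (a : ℂ) • P) ∘L Tstar)
      ((1 - (a : ℂ) • P) ∘L T ∘L Tstar ∘L (1 - (a : ℂ) • P)) := by
  set R : Lp ℂ 2 (cubeMeasure d) →L[ℂ] Lp ℂ 2 (cubeMeasure d) :=
    (Lp.compMeasurePreservingₗᵢ ℂ (cubeRefl d) (measPres d)).toContinuousLinearMap with hRdef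
  have hRcoe : ∀ u : Lp ℂ 2 (cubeMeasure d),
      (R u : (Fin d → ℝ) → ℂ) =ᵐ[cubeMeasure d] (u : (Fin d → ℝ) → ℂ) ∘ cubeRefl d :=
    fun u => Lp.coeFn_compMeasurePreserving u (measPres d)
  have hcomp : ∀ {f g : (Fin d → ℝ) → ℂ}, f =ᵐ[cubeMeasure d] g →
      f ∘ cubeRefl d =ᵐ[cubeMeasure d] g ∘ cubeRefl d := by
    intro f g h
    exact ae_eq_comp (measPres d).measurable.aemeasurable (by rwa [(measPres d).map_eq])
  -- pointwise (in Lp) identities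
  have hRR : ∀ u : Lp ℂ 2 (cubeMeasure d), R (R u) = u := by
    intro u
    apply Lp.ext
    calc (R (R u) : (Fin d → ℝ) → ℂ)
        =ᵐ[cubeMeasure d] (R u : (Fin d → ℝ) → ℂ) ∘ cubeRefl d := hRcoe (R u)
      _ =ᵐ[cubeMeasure d] ((u : (Fin d → ℝ) → ℂ) ∘ cubeRefl d) ∘ cubeRefl d := hcomp (hRcoe u)
      _ = (u : (Fin d → ℝ) → ℂ) := by
          funext x
          show (u : (Fin d → ℝ) → ℂ) (cubeRefl d (cubeRefl d x)) = (u : (Fin d → ℝ) → ℂ) x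
          rw [cubeRefl_involutive]
  have hTs : ∀ u : Lp ℂ 2 (cubeMeasure d), Tstar u = R (T (R u)) := by
    intro u
    apply Lp.ext
    have key : (T (R u) : (Fin d → ℝ) → ℂ) =ᵐ[cubeMeasure d]
        (fun x => ∫ z in Set.Icc x 1, (u : (Fin d → ℝ) → ℂ) z ∂(cubeMeasure d)) ∘ cubeRefl d := by
      filter_upwards [hT (R u)] with x hx
      rw [hx]
      have h2 : ∫ y in Set.Icc 0 x, (R u : (Fin d → ℝ) → ℂ) y ∂(cubeMeasure d)
          = ∫ y in Set.Icc 0 x, (u : (Fin d → ℝ) → ℂ) (cubeRefl d y) ∂(cubeMeasure d) :=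
        integral_congr_ae (ae_restrict_of_ae (hRcoe u))
      rw [h2]
      show _ = ∫ z in Set.Icc (cubeRefl d x) 1, (u : (Fin d → ℝ) → ℂ) z ∂(cubeMeasure d)
      rw [← preimage_Icc_left d x]
      exact (measPres d).setIntegral_preimage_emb (cubeRefl_emb d) _ _
    calc (Tstar u : (Fin d → ℝ) → ℂ)
        =ᵐ[cubeMeasure d]
          fun x => ∫ z in Set.Icc x 1, (u : (Fin d → ℝ) → ℂ) z ∂(cubeMeasure d) := hTstar u
      _ = ((fun x => ∫ z in Set.Icc x 1, (u : (Fin d → ℝ) → ℂ) z ∂(cubeMeasure d)) ∘ cubeRefl d)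
            ∘ cubeRefl d := by
          funext x
          show _ = ∫ z in Set.Icc (cubeRefl d (cubeRefl d x)) 1,
            (u : (Fin d → ℝ) → ℂ) z ∂(cubeMeasure d)
          rw [cubeRefl_involutive]
      _ =ᵐ[cubeMeasure d] (T (R u) : (Fin d → ℝ) → ℂ) ∘ cubeRefl d := (hcomp key).symm
      _ =ᵐ[cubeMeasure d] (R (T (R u)) : (Fin d → ℝ) → ℂ) := (hRcoe (T (R u))).symm
  have hPR : ∀ u : Lp ℂ 2 (cubeMeasure d), P (R u) = R (P u) := by
    intro u
    apply Lp.ext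
    have hint : ∫ y, (R u : (Fin d → ℝ) → ℂ) y ∂(cubeMeasure d)
        = ∫ y, (u : (Fin d → ℝ) → ℂ) y ∂(cubeMeasure d) := by
      rw [integral_congr_ae (hRcoe u)]
      exact (measPres d).integral_comp (cubeRefl_emb d) _
    calc (P (R u) : (Fin d → ℝ) → ℂ)
        =ᵐ[cubeMeasure d] fun _ => ∫ y, (R u : (Fin d → ℝ) → ℂ) y ∂(cubeMeasure d) := hP (R u)
      _ = fun _ => ∫ y, (u : (Fin d → ℝ) → ℂ) y ∂(cubeMeasure d) := by rw [hint]
      _ = (fun _ => ∫ y, (u : (Fin d → ℝ) → ℂ) y ∂(cubeMeasure d)) ∘ cubeRefl d := rfl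
      _ =ᵐ[cubeMeasure d] (P u : (Fin d → ℝ) → ℂ) ∘ cubeRefl d := (hcomp (hP u)).symm
      _ =ᵐ[cubeMeasure d] (R (P u) : (Fin d → ℝ) → ℂ) := (hRcoe (P u)).symm
  -- algebra
  set Q : Lp ℂ 2 (cubeMeasure d) →L[ℂ] Lp ℂ 2 (cubeMeasure d) := 1 - (a : ℂ) • P with hQdef
  have hQR : ∀ u : Lp ℂ 2 (cubeMeasure d), Q (R u) = R (Q u) := by
    intro u
    have h1 : Q (R u) = R u - (a : ℂ) • P (R u) := by
      rw [hQdef, ContinuousLinearMap.sub_apply, ContinuousLinearMap.smul_apply, ContinuousLinearMap.one_apply]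
    have h2 : Q u = u - (a : ℂ) • P u := by
      rw [hQdef, ContinuousLinearMap.sub_apply, ContinuousLinearMap.smul_apply, ContinuousLinearMap.one_apply]
    rw [h1, h2, hPR u, map_sub, ContinuousLinearMap.map_smul]
  have hRRmul : R * R = 1 := by
    refine ContinuousLinearMap.ext fun u => ?_
    show R (R u) = u
    exact hRR u
  have heq : (Q ∘L Tstar) * (T ∘L Q) = R * ((Q ∘L T ∘L Tstar ∘L Q)) * R := by
    refine ContinuousLinearMap.ext fun u => ?_
    show Q (Tstar (T (Q u))) = R (Q (T (Tstar (Q (R u)))))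
    simp only [hTs, hQR, hRR]
  have e1 : (T ∘L Q ∘L Q ∘L Tstar) = (T ∘L Q) * (Q ∘L Tstar) := by
    refine ContinuousLinearMap.ext fun u => ?_
    rfl
  have step1 : SameNonzeroEigenvalues ((T ∘L Q) * (Q ∘L Tstar)) ((Q ∘L Tstar) * (T ∘L Q)) :=
    aux_sameNZ_mul _ _
  have step2 : SameNonzeroEigenvalues ((Q ∘L Tstar) * (T ∘L Q)) (Q ∘L T ∘L Tstar ∘L Q) := by
    rw [heq]
    exact aux_sameNZ_conj R _ hRRmul
  rw [e1]
  intro l hl m hm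
  exact (step1 l hl m hm).trans (step2 l hl m hm)
end
end
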